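/- If T is a subnormal bounded operator on a Hilbert space H, then the closure of the range of the self-adjoint commutator [T*, T] = T*T − TT* is invariant under T*. -/

import Mathlib

/-!
Let `N` be a normal extension of `T` along an isometry `E`, and put `C = N† E - E T†`.
Expanding with `E† E = 1`, `N E = E T` and `N† N = N N†` gives `C† C = T† T - T T† =: D` and
`C T = N C - E D`. Hence `ker D = ker C`, and `C x = 0` forces `C (T x) = 0`, so `ker D` is
`T`-invariant. As `D` is self-adjoint, the closure of its range is `(ker D)ᗮ`, which is therefore
`T†`-invariant.
-/

open ContinuousLinearMap

universe v

/-- A bounded operator on a complex Hilbert space is *subnormal* if it admits a normal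
extension: there are a complex Hilbert space `K`, an isometric linear embedding `e : H → K`
and a normal operator `N` on `K` such that `N ∘ e = e ∘ T` (so the image of `H` is
invariant under `N` and `N` restricts to `T` there). -/
def Subnormal {H : Type*} [NormedAddCommGroup H] [InnerProductSpace ℂ H] [CompleteSpace H]
    (T : H →L[ℂ] H) : Prop :=
  ∃ (K : Type v) (_ : NormedAddCommGroup K) (_ : InnerProductSpace ℂ K) (_ : CompleteSpace K)
    (e : H →ₗᵢ[ℂ] K) (N : K →L[ℂ] K),
      adjoint N ∘L N = N ∘L adjoint N ∧ ∀ x : H, N (e x) = e (T x)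

section SelfCommutator

open Module End

variable {𝕜 H K : Type*} [RCLike 𝕜]
  [NormedAddCommGroup H] [InnerProductSpace 𝕜 H] [CompleteSpace H]
  [NormedAddCommGroup K] [InnerProductSpace 𝕜 K] [CompleteSpace K]

theorem ContinuousLinearMap.closure_range_mem_invtSubmodule_adjoint {D T : H →L[𝕜] H}
    (hD : adjoint D = D) (h : D.ker ∈ invtSubmodule (T : H →ₗ[𝕜] H)) :
    D.range.topologicalClosure ∈ invtSubmodule (adjoint T : H →ₗ[𝕜] H) := by
  rw [← hD, ← orthogonal_ker]
  exact orthogonal_mem_invtSubmodule (by rwa [adjoint_adjoint])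

theorem ContinuousLinearMap.adjoint_selfCommutator (T : H →L[𝕜] H) :
    adjoint (adjoint T ∘L T - T ∘L adjoint T) = adjoint T ∘L T - T ∘L adjoint T := by
  rw [map_sub, adjoint_comp, adjoint_comp, adjoint_adjoint]

section NormalExtension

variable {E : H →L[𝕜] K} {N : K →L[𝕜] K} {T : H →L[𝕜] H}

/-- Since `E T† = E E† N† E`, this is `(1 - E E†) N† E`: the part of `N†` on `E H` that leaves
`E H`. -/
noncomputable def normalExtensionDefect (E : H →L[𝕜] K) (N : K →L[𝕜] K) (T : H →L[𝕜] H) :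
    H →L[𝕜] K :=
  adjoint N ∘L E - E ∘L adjoint T

theorem adjoint_apply_adjoint_apply_of_comp_eq (hE : adjoint E ∘L E = 1) (hNE : N ∘L E = E ∘L T)
    (x : H) : adjoint E (adjoint N (E x)) = adjoint T x := by
  have hT : adjoint E ∘L N ∘L E = T := by rw [hNE, ← comp_assoc, hE, one_def, id_comp]
  rw [← hT, adjoint_comp, adjoint_comp, adjoint_adjoint]
  rfl

theorem adjoint_normalExtensionDefect_comp_self (hE : adjoint E ∘L E = 1)
    (hN : adjoint N ∘L N = N ∘L adjoint N) (hNE : N ∘L E = E ∘L T) :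
    adjoint (normalExtensionDefect E N T) ∘L normalExtensionDefect E N T =
      adjoint T ∘L T - T ∘L adjoint T := by
  have hE' (x : H) : adjoint E (E x) = x := by simpa using congr($hE x)
  have hN' (v : K) : N (adjoint N v) = adjoint N (N v) := by simpa using congr($hN v).symm
  have hNE' (x : H) : N (E x) = E (T x) := by simpa using congr($hNE x)
  ext x
  simp only [normalExtensionDefect, map_sub, adjoint_comp, adjoint_adjoint, comp_apply,
    sub_apply, hE', hN', hNE', adjoint_apply_adjoint_apply_of_comp_eq hE hNE]
  abel

theorem normalExtensionDefect_comp (hN : adjoint N ∘L N = N ∘L adjoint N)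
    (hNE : N ∘L E = E ∘L T) :
    normalExtensionDefect E N T ∘L T =
      N ∘L normalExtensionDefect E N T - E ∘L (adjoint T ∘L T - T ∘L adjoint T) := by
  have hN' (v : K) : N (adjoint N v) = adjoint N (N v) := by simpa using congr($hN v).symm
  have hNE' (x : H) : N (E x) = E (T x) := by simpa using congr($hNE x)
  ext x
  simp only [normalExtensionDefect, comp_apply, sub_apply, map_sub, hN', hNE']
  abel

theorem ker_selfCommutator_mem_invtSubmodule (hE : adjoint E ∘L E = 1)
    (hN : adjoint N ∘L N = N ∘L adjoint N) (hNE : N ∘L E = E ∘L T) :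
    (adjoint T ∘L T - T ∘L adjoint T).ker ∈ invtSubmodule (T : H →ₗ[𝕜] H) := by
  rw [← adjoint_normalExtensionDefect_comp_self hE hN hNE, ker_adjoint_comp_self]
  intro x (hx : normalExtensionDefect E N T x = 0)
  have hx' : (adjoint T ∘L T - T ∘L adjoint T) x = 0 := by
    rw [← adjoint_normalExtensionDefect_comp_self hE hN hNE, comp_apply, hx, map_zero]
  show normalExtensionDefect E N T (T x) = 0
  rw [← comp_apply, normalExtensionDefect_comp hN hNE, sub_apply, comp_apply, comp_apply, hx,
    hx', map_zero, map_zero, sub_zero]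

end NormalExtension

end SelfCommutator

theorem stmt_15 {H : Type*} [NormedAddCommGroup H] [InnerProductSpace ℂ H]
    [CompleteSpace H] (T : H →L[ℂ] H) (hT : Subnormal T) :
    Submodule.map ((adjoint T : H →L[ℂ] H) : H →ₗ[ℂ] H)
        ((LinearMap.range ((adjoint T ∘L T - T ∘L adjoint T : H →L[ℂ] H) : H →ₗ[ℂ] H)).topologicalClosure) ≤
      (LinearMap.range ((adjoint T ∘L T - T ∘L adjoint T : H →L[ℂ] H) : H →ₗ[ℂ] H)).topologicalClosure := by
  obtain ⟨K, _, _, _, e, N, hN, hNe⟩ := hT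
  have hNE : N ∘L e.toContinuousLinearMap = e.toContinuousLinearMap ∘L T := ext hNe
  have hker := ker_selfCommutator_mem_invtSubmodule e.adjoint_comp_self hN hNE
  exact (Module.End.mem_invtSubmodule_iff_map_le _).mp
    (closure_range_mem_invtSubmodule_adjoint (adjoint_selfCommutator T) hker)
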